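/- Let φ be a weight of a quasi-metric space (X,d). Then φ is an ideal if and only if there exists a forward Cauchy net {x_i}_{i∈D} in X such that φ = inf_{i∈D} sup_{j≥i} d(−, x_j) (pointwise). -/

import Mathlib

/-!
An ideal `φ` is the limit of the net of formal balls `(a, r)` with `φ a < r`, ordered by
`(a, r) ⊑ (b, s) ↔ s + d a b ≤ r`. This net is directed precisely because `φ` is an ideal:
`ρ(φ, -)` is positive at each of the weights `r ⊖ d(a, -)`, `s ⊖ d(b, -)` and `η`, hence at
their minimum, which produces a point `c` with `φ c < min (r ⊖ d a c) (s ⊖ d b c) η`, i.e. a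
small ball below both `(a, r)` and `(b, s)`.

Conversely, if `φ = limsup_j d(-, x_j)` along a forward Cauchy net, then
`ρ(φ, λ) = limsup_j λ(x_j)` for every weight `λ`, and since weights are almost increasing along
a forward Cauchy net, this limsup commutes with binary minima.
-/

open scoped ENNReal NNReal

universe u v w

/-- A quasi-metric space structure on `X`: distances valued in `[0,∞]`, with
`d x x = 0`, the triangle inequality, and separatedness. -/
structure QuasiMetric (X : Type u) where
  d : X → X → ℝ≥0∞
  d_self : ∀ x, d x x = 0
  d_triangle : ∀ x y z, d x z ≤ d x y + d y z
  d_separated : ∀ x y, d x y = 0 → d y x = 0 → x = y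

namespace QuasiMetric

variable {X : Type u}

/-- The order on formal balls: `(x, r) ⊑ (y, s)` iff `s + d x y ≤ r`
(equivalently `d x y ≤ r - s`). -/
def ballLE (q : QuasiMetric X) (p p' : X × ℝ≥0) : Prop :=
  (p'.2 : ℝ≥0∞) + q.d p.1 p'.1 ≤ (p.2 : ℝ≥0∞)

/-- `b` is a least upper bound of the set `S` of formal balls. -/
def IsBallLUB (q : QuasiMetric X) (S : Set (X × ℝ≥0)) (b : X × ℝ≥0) : Prop :=
  (∀ p ∈ S, q.ballLE p b) ∧ ∀ c, (∀ p ∈ S, q.ballLE p c) → q.ballLE b c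

/-- `le` is a directed preorder (reflexive, transitive, directed). -/
def DirectedPre {D : Type v} (le : D → D → Prop) : Prop :=
  (∀ i, le i i) ∧ (∀ i j k, le i j → le j k → le i k) ∧ ∀ i j, ∃ k, le i k ∧ le j k

/-- A net `x : D → X` is forward Cauchy: `inf_i sup_{k ≥ j ≥ i} d (x j) (x k) = 0`. -/
def ForwardCauchy (q : QuasiMetric X) {D : Type v} (le : D → D → Prop) (x : D → X) : Prop :=
  (⨅ i, ⨆ j, ⨆ (_ : le i j), ⨆ k, ⨆ (_ : le j k), q.d (x j) (x k)) = 0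

/-- `a` is a Yoneda limit of the net `x : D → X`:
for all `y`, `d a y = inf_i sup_{j ≥ i} d (x j) y`. -/
def IsYonedaLimit (q : QuasiMetric X) {D : Type v} (le : D → D → Prop) (x : D → X) (a : X) :
    Prop :=
  ∀ y, q.d a y = ⨅ i, ⨆ j, ⨆ (_ : le i j), q.d (x j) y

/-- `(X, d)` is Yoneda complete: every forward Cauchy net has a Yoneda limit. -/
def YonedaComplete (q : QuasiMetric X) : Prop :=
  ∀ (D : Type u) (le : D → D → Prop), DirectedPre le → Nonempty D →
    ∀ x : D → X, q.ForwardCauchy le x → ∃ a, q.IsYonedaLimit le x a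

/-- `(X, d)` is standard: whenever a directed set of formal balls (viewed as a monotone
net indexed by itself) has a least upper bound, the corresponding forward Cauchy net of
centers has a Yoneda limit. -/
def Standard (q : QuasiMetric X) : Prop :=
  ∀ S : Set (X × ℝ≥0), S.Nonempty → DirectedOn q.ballLE S →
    (∃ b, q.IsBallLUB S b) →
    ∃ a, q.IsYonedaLimit (fun p p' : ↥S => q.ballLE p.1 p'.1) (fun p : ↥S => p.1.1) a

/-- A weight of `(X, d)`: `φ x ≤ φ y + d x y`. -/
def IsWeight (q : QuasiMetric X) (φ : X → ℝ≥0∞) : Prop :=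
  ∀ x y, φ x ≤ φ y + q.d x y

/-- The quasi-metric on weights: `ρ(φ, ψ) = sup_y (ψ y ⊖ φ y)`. -/
noncomputable def rho {Y : Type v} (φ ψ : Y → ℝ≥0∞) : ℝ≥0∞ := ⨆ y, ψ y - φ y

/-- An ideal of `(X, d)`: a weight `φ` with `inf φ = 0` such that
`ρ(φ, min (λ, μ)) = min (ρ(φ,λ), ρ(φ,μ))` for all weights `λ`, `μ`. -/
def IsIdeal (q : QuasiMetric X) (φ : X → ℝ≥0∞) : Prop :=
  q.IsWeight φ ∧ (⨅ x, φ x) = 0 ∧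
    ∀ l m : X → ℝ≥0∞, q.IsWeight l → q.IsWeight m →
      rho φ (fun x => min (l x) (m x)) = min (rho φ l) (rho φ m)

/-- A weight `φ` is bounded: there are `r < ∞` and `a ∈ X` with `d x a ≤ r + φ x` for all `x`. -/
def BoundedWeight (q : QuasiMetric X) (φ : X → ℝ≥0∞) : Prop :=
  ∃ (r : ℝ≥0) (a : X), ∀ x, q.d x a ≤ (r : ℝ≥0∞) + φ x

/-- `b` is a colimit of the weight `φ`: for all `y`, `d b y = sup_x (d x y ⊖ φ x)`. -/
def IsColimit (q : QuasiMetric X) (φ : X → ℝ≥0∞) (b : X) : Prop :=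
  ∀ y, q.d b y = ⨆ x, q.d x y - φ x

/-- The poset of formal balls is a dcpo: every (nonempty) directed subset has a lub. -/
def BallDcpo (q : QuasiMetric X) : Prop :=
  ∀ S : Set (X × ℝ≥0), S.Nonempty → DirectedOn q.ballLE S → ∃ b, q.IsBallLUB S b

/-- The poset of formal balls is a local dcpo: every (nonempty) directed subset with an
upper bound has a lub. -/
def BallLocalDcpo (q : QuasiMetric X) : Prop :=
  ∀ S : Set (X × ℝ≥0), S.Nonempty → DirectedOn q.ballLE S →
    (∃ c, ∀ p ∈ S, q.ballLE p c) → ∃ b, q.IsBallLUB S b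

/-- `u` is way below `v` in the poset of formal balls. -/
def ballWayBelow (q : QuasiMetric X) (u v : X × ℝ≥0) : Prop :=
  ∀ S : Set (X × ℝ≥0), S.Nonempty → DirectedOn q.ballLE S →
    ∀ s, q.IsBallLUB S s → q.ballLE v s → ∃ p ∈ S, q.ballLE u p

/-- The poset of formal balls is a continuous poset: for every `p`, the set of elements
way below `p` is (nonempty) directed and has `p` as its least upper bound. -/
def BallContinuousPoset (q : QuasiMetric X) : Prop :=
  ∀ p : X × ℝ≥0,
    {u : X × ℝ≥0 | q.ballWayBelow u p}.Nonempty ∧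
    DirectedOn q.ballLE {u : X × ℝ≥0 | q.ballWayBelow u p} ∧
    q.IsBallLUB {u : X × ℝ≥0 | q.ballWayBelow u p} p

/-- A function `χ` is `𝓙`-closed: `ρ(ψ, χ) ≥ χ (colim ψ)` for every bounded ideal `ψ`
possessing a colimit. -/
def JClosed (q : QuasiMetric X) (χ : X → ℝ≥0∞) : Prop :=
  ∀ ψ : X → ℝ≥0∞, q.IsIdeal ψ → q.BoundedWeight ψ → ∀ c, q.IsColimit ψ c → χ c ≤ rho ψ χ

/-- `(X, d)` is a continuous `𝕁`-algebra: every bounded ideal has a colimit, and there is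
a map `⇓` assigning to each `x` a bounded ideal `⇓x` with `ρ(⇓x, φ) = d x (colim φ)` for
all `x` and all bounded ideals `φ`. -/
def ContinuousJAlgebra (q : QuasiMetric X) : Prop :=
  ∃ colim : (X → ℝ≥0∞) → X,
    (∀ φ, q.IsIdeal φ → q.BoundedWeight φ → q.IsColimit φ (colim φ)) ∧
    ∃ w : X → X → ℝ≥0∞,
      (∀ x, q.IsIdeal (w x) ∧ q.BoundedWeight (w x)) ∧
      ∀ (x : X) (φ : X → ℝ≥0∞), q.IsIdeal φ → q.BoundedWeight φ →
        rho (w x) φ = q.d x (colim φ)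

/-- The quasi-metric space of all functions `X → [0,∞]` satisfying a predicate `P`
(e.g. the bounded weights, or the bounded ideals), with the quasi-metric
`ρ(φ, ψ) = sup_x (ψ x ⊖ φ x)`. -/
noncomputable def weightSpace (q : QuasiMetric X) (P : (X → ℝ≥0∞) → Prop) :
    QuasiMetric {φ : X → ℝ≥0∞ // P φ} where
  d φ ψ := rho φ.1 ψ.1
  d_self φ := by simp [rho]
  d_triangle φ ψ χ := by
    refine iSup_le fun x => ?_
    calc χ.1 x - φ.1 x ≤ (χ.1 x - ψ.1 x) + (ψ.1 x - φ.1 x) := tsub_le_tsub_add_tsub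
    _ ≤ rho ψ.1 χ.1 + rho φ.1 ψ.1 :=
        add_le_add (le_iSup (fun y => χ.1 y - ψ.1 y) x) (le_iSup (fun y => ψ.1 y - φ.1 y) x)
    _ = rho φ.1 ψ.1 + rho ψ.1 χ.1 := add_comm _ _
  d_separated φ ψ h1 h2 := by
    apply Subtype.ext
    funext x
    have hx1 : ψ.1 x - φ.1 x ≤ 0 := by
      rw [← h1]; exact le_iSup (fun y => ψ.1 y - φ.1 y) x
    have hx2 : φ.1 x - ψ.1 x ≤ 0 := by
      rw [← h2]; exact le_iSup (fun y => φ.1 y - ψ.1 y) x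
    exact le_antisymm (tsub_eq_zero_iff_le.mp (le_antisymm hx2 zero_le))
      (tsub_eq_zero_iff_le.mp (le_antisymm hx1 zero_le))

end QuasiMetric

namespace QuasiMetric

variable {X : Type u} {q : QuasiMetric X}

noncomputable def netLimsup {D : Type v} (le : D → D → Prop) (f : D → ℝ≥0∞) : ℝ≥0∞ :=
  ⨅ i, ⨆ j, ⨆ (_ : le i j), f j

def ballsAbove (φ : X → ℝ≥0∞) : Set (X × ℝ≥0) :=
  {p | φ p.1 < p.2}

lemma isWeight_min {l m : X → ℝ≥0∞} (hl : q.IsWeight l) (hm : q.IsWeight m) :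
    q.IsWeight fun x => min (l x) (m x) := fun x y =>
  (min_le_min (hl x y) (hm x y)).trans_eq (min_add_add_right _ _ _)

lemma isWeight_const (c : ℝ≥0∞) : q.IsWeight fun _ => c := fun _ _ => le_self_add

lemma isWeight_sub_dist (a : X) (r : ℝ≥0∞) : q.IsWeight fun y => r - q.d a y := fun x y => by
  rw [tsub_le_iff_right]
  calc r ≤ r - q.d a y + q.d a y := le_tsub_add
    _ ≤ r - q.d a y + (q.d a x + q.d x y) := by gcongr; exact q.d_triangle a x y
    _ = r - q.d a y + q.d x y + q.d a x := by ring

lemma le_rho_add {Y : Type v} (φ l : Y → ℝ≥0∞) (y : Y) : l y ≤ rho φ l + φ y :=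
  tsub_le_iff_right.mp (le_iSup (fun y => l y - φ y) y)

lemma rho_pos_iff {Y : Type v} {φ l : Y → ℝ≥0∞} : 0 < rho φ l ↔ ∃ y, φ y < l y := by
  simp only [rho, lt_iSup_iff, tsub_pos_iff_lt]

lemma ballLE_refl (p : X × ℝ≥0) : q.ballLE p p := by
  simp [ballLE, q.d_self]

lemma ballLE_trans {p p' p'' : X × ℝ≥0} (h : q.ballLE p p') (h' : q.ballLE p' p'') :
    q.ballLE p p'' :=
  calc (p''.2 : ℝ≥0∞) + q.d p.1 p''.1 ≤ p''.2 + (q.d p.1 p'.1 + q.d p'.1 p''.1) := by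
        gcongr; exact q.d_triangle _ _ _
    _ = (p''.2 + q.d p'.1 p''.1) + q.d p.1 p'.1 := by ring
    _ ≤ p'.2 + q.d p.1 p'.1 := by gcongr; exact h'
    _ ≤ p.2 := h

lemma ballLE.dist_le {p p' : X × ℝ≥0} (h : q.ballLE p p') : q.d p.1 p'.1 ≤ p.2 :=
  le_add_self.trans h

lemma ballLE.radius_le {p p' : X × ℝ≥0} (h : q.ballLE p p') : (p'.2 : ℝ≥0∞) ≤ p.2 :=
  le_self_add.trans h

lemma directedPre_ballLE {S : Set (X × ℝ≥0)} (hS : DirectedOn q.ballLE S) :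
    DirectedPre fun p p' : ↥S => q.ballLE p.1 p'.1 := by
  refine ⟨fun p => ballLE_refl p.1, fun _ _ _ => ballLE_trans, fun p p' => ?_⟩
  obtain ⟨b, hb, h, h'⟩ := hS p.1 p.2 p'.1 p'.2
  exact ⟨⟨b, hb⟩, h, h'⟩

section Ideal

variable {φ : X → ℝ≥0∞}

lemma IsIdeal.exists_lt (hI : q.IsIdeal φ) {ε : ℝ≥0} (hε : 0 < ε) : ∃ a, φ a < ε :=
  iInf_lt_iff.mp (hI.2.1 ▸ ENNReal.coe_pos.mpr hε)

lemma IsIdeal.exists_lt_min {l m : X → ℝ≥0∞} (hI : q.IsIdeal φ) (hl : q.IsWeight l)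
    (hm : q.IsWeight m) (hφl : ∃ y, φ y < l y) (hφm : ∃ y, φ y < m y) :
    ∃ y, φ y < min (l y) (m y) := by
  rw [← rho_pos_iff] at hφl hφm ⊢
  rw [hI.2.2 l m hl hm]
  exact lt_min hφl hφm

lemma IsIdeal.exists_mem_ballsAbove_le (hI : q.IsIdeal φ) {p p' : X × ℝ≥0}
    (hp : p ∈ ballsAbove φ) (hp' : p' ∈ ballsAbove φ) {η : ℝ≥0} (hη : 0 < η) :
    ∃ b ∈ ballsAbove φ, q.ballLE p b ∧ q.ballLE p' b ∧ b.2 ≤ η := by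
  have hball : ∀ r ∈ ballsAbove φ, ∃ y, φ y < r.2 - q.d r.1 y := fun r hr =>
    ⟨r.1, by simpa [ballsAbove, q.d_self] using hr⟩
  obtain ⟨c, hc⟩ := hI.exists_lt_min (isWeight_sub_dist p.1 p.2)
    (isWeight_min (isWeight_sub_dist p'.1 p'.2) (isWeight_const η)) (hball p hp)
    (hI.exists_lt_min (isWeight_sub_dist _ _) (isWeight_const η) (hball p' hp') (hI.exists_lt hη))
  obtain ⟨γ, hcγ, hγ⟩ := ENNReal.lt_iff_exists_nnreal_btwn.mp hc
  simp only [lt_min_iff] at hγ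
  obtain ⟨hγp, hγp', hγη⟩ := hγ
  exact ⟨(c, γ), hcγ, (lt_tsub_iff_right.mp hγp).le, (lt_tsub_iff_right.mp hγp').le,
    ENNReal.coe_le_coe.mp hγη.le⟩

lemma IsIdeal.directedOn_ballsAbove (hI : q.IsIdeal φ) : DirectedOn q.ballLE (ballsAbove φ) :=
  fun _ hp _ hp' =>
    let ⟨b, hb, h, h', _⟩ := hI.exists_mem_ballsAbove_le hp hp' one_pos
    ⟨b, hb, h, h'⟩

lemma IsIdeal.nonempty_ballsAbove (hI : q.IsIdeal φ) : Nonempty (ballsAbove φ) :=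
  let ⟨a, ha⟩ := hI.exists_lt one_pos
  ⟨⟨(a, 1), ha⟩⟩

lemma IsIdeal.forwardCauchy_ballsAbove (hI : q.IsIdeal φ) :
    q.ForwardCauchy (fun p p' : ↥(ballsAbove φ) => q.ballLE p.1 p'.1) fun p => p.1.1 := by
  refine le_antisymm (ENNReal.le_of_forall_pos_le_add fun ε hε _ => ?_) bot_le
  obtain ⟨a, ha⟩ := hI.exists_lt hε
  refine (iInf_le _ ⟨(a, ε), ha⟩).trans ?_
  rw [zero_add]
  exact iSup₂_le fun j hj => iSup₂_le fun k hk => hk.dist_le.trans hj.radius_le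

lemma IsIdeal.eq_netLimsup_ballsAbove (hI : q.IsIdeal φ) (y : X) :
    φ y = netLimsup (fun p p' : ↥(ballsAbove φ) => q.ballLE p.1 p'.1) fun p => q.d y p.1.1 := by
  refine le_antisymm (le_iInf fun i => ENNReal.le_of_forall_pos_le_add fun η hη _ => ?_)
    (ENNReal.le_of_forall_pos_le_add fun η hη hy => ?_)
  · obtain ⟨b, hb, hib, -, hbη⟩ := hI.exists_mem_ballsAbove_le i.2 i.2 hη
    have hdist : q.d y b.1 ≤ ⨆ (j : ↥(ballsAbove φ)) (_ : q.ballLE i.1 j.1), q.d y j.1.1 :=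
      le_iSup₂_of_le (f := fun (j : ↥(ballsAbove φ)) _ => q.d y j.1.1) ⟨b, hb⟩ hib le_rfl
    have hφb : φ b.1 ≤ η := hb.le.trans (ENNReal.coe_le_coe.mpr hbη)
    calc φ y ≤ φ b.1 + q.d y b.1 := hI.1 y b.1
      _ ≤ _ := (add_le_add hφb hdist).trans_eq (add_comm _ _)
  · lift φ y to ℝ≥0 using hy.ne with r hr
    have hmem : (y, r + η) ∈ ballsAbove φ := by
      simpa [ballsAbove, ← hr] using ENNReal.coe_lt_coe.mpr (lt_add_of_pos_right r hη)
    refine (iInf_le _ ⟨(y, r + η), hmem⟩).trans (iSup₂_le fun j hj => ?_)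
    simpa using hj.dist_le

end Ideal

section Net

variable {D : Type v} {le : D → D → Prop} {x : D → X}

lemma isWeight_netLimsup_dist :
    q.IsWeight fun y => netLimsup le fun j => q.d y (x j) := fun y z =>
  calc netLimsup le (fun j => q.d y (x j)) ≤ netLimsup le fun j => q.d z (x j) + q.d y z :=
        iInf_mono fun _ => iSup₂_mono fun j _ => (q.d_triangle y z (x j)).trans_eq (add_comm _ _)
    _ ≤ netLimsup le (fun j => q.d z (x j)) + q.d y z := by
        rw [netLimsup, netLimsup, ENNReal.iInf_add]
        exact iInf_mono fun _ => iSup₂_le fun j hj => by gcongr; exact le_iSup₂_of_le j hj le_rfl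

lemma ForwardCauchy.exists_forall_dist_lt (hx : q.ForwardCauchy le x) {ε : ℝ≥0∞} (hε : 0 < ε) :
    ∃ i, ∀ j k, le i j → le j k → q.d (x j) (x k) < ε := by
  rw [ForwardCauchy] at hx
  obtain ⟨i, hi⟩ := iInf_lt_iff.mp (hx ▸ hε)
  refine ⟨i, fun j k hj hk => lt_of_le_of_lt ?_ hi⟩
  exact le_iSup₂_of_le j hj (le_iSup₂_of_le (f := fun k _ => q.d (x j) (x k)) k hk le_rfl)

lemma ForwardCauchy.exists_forall_netLimsup_dist_le (hx : q.ForwardCauchy le x) {ε : ℝ≥0∞}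
    (hε : 0 < ε) : ∃ i, ∀ j, le i j → (netLimsup le fun k => q.d (x j) (x k)) ≤ ε := by
  obtain ⟨i, hi⟩ := hx.exists_forall_dist_lt hε
  exact ⟨i, fun j hj => (iInf_le _ j).trans (iSup₂_le fun k hk => (hi j k hj hk).le)⟩

lemma ForwardCauchy.iInf_netLimsup_dist (hD : DirectedPre le) (hx : q.ForwardCauchy le x) :
    (⨅ y, netLimsup le fun j => q.d y (x j)) = 0 := by
  refine le_antisymm (ENNReal.le_of_forall_pos_le_add fun ε hε _ => ?_) bot_le
  obtain ⟨i, hi⟩ := hx.exists_forall_netLimsup_dist_le (ENNReal.coe_pos.mpr hε)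
  exact (iInf_le _ (x i)).trans ((hi i (hD.1 i)).trans_eq (zero_add _).symm)

lemma ForwardCauchy.rho_netLimsup_dist (hD : DirectedPre le) (hx : q.ForwardCauchy le x)
    {l : X → ℝ≥0∞} (hl : q.IsWeight l) :
    rho (fun y => netLimsup le fun j => q.d y (x j)) l = netLimsup le fun j => l (x j) := by
  refine le_antisymm (iSup_le fun y => le_iInf fun i => ?_)
    (ENNReal.le_of_forall_pos_le_add fun ε hε _ => ?_)
  · rw [tsub_le_iff_tsub_le]
    refine le_iInf fun i' => ?_
    obtain ⟨k, hik, hi'k⟩ := hD.2.2 i i'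
    refine le_iSup₂_of_le k hi'k (tsub_le_iff_right.mpr ?_)
    calc l y ≤ l (x k) + q.d y (x k) := hl y (x k)
      _ ≤ (⨆ j, ⨆ (_ : le i j), l (x j)) + q.d y (x k) := by
          gcongr; exact le_iSup₂_of_le k hik le_rfl
      _ = _ := add_comm _ _
  · obtain ⟨i, hi⟩ := hx.exists_forall_netLimsup_dist_le (ENNReal.coe_pos.mpr hε)
    refine (iInf_le _ i).trans (iSup₂_le fun j hj => ?_)
    calc l (x j) ≤ rho _ l + netLimsup le (fun k => q.d (x j) (x k)) := le_rho_add _ l (x j)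
      _ ≤ _ := by gcongr; exact hi j hj

lemma ForwardCauchy.netLimsup_min (hD : DirectedPre le) (hx : q.ForwardCauchy le x)
    {l m : X → ℝ≥0∞} (hl : q.IsWeight l) (hm : q.IsWeight m) :
    (netLimsup le fun j => min (l (x j)) (m (x j))) =
      min (netLimsup le fun j => l (x j)) (netLimsup le fun j => m (x j)) := by
  obtain ⟨-, htrans, hdir⟩ := hD
  refine le_antisymm (le_min (iInf_mono fun _ => iSup₂_mono fun _ _ => min_le_left _ _)
    (iInf_mono fun _ => iSup₂_mono fun _ _ => min_le_right _ _)) ?_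
  refine le_iInf fun i => ENNReal.le_of_forall_pos_le_add fun ε hε _ => ?_
  obtain ⟨i₀, hi₀⟩ := hx.exists_forall_dist_lt (ENNReal.coe_pos.mpr hε)
  obtain ⟨i₁, hii₁, hi₀i₁⟩ := hdir i i₀
  have hmono : ∀ f : X → ℝ≥0∞, q.IsWeight f → ∀ j n, le i₁ j → le j n → f (x j) ≤ f (x n) + ε :=
    fun f hf j n hj hn => (hf _ _).trans (by gcongr; exact (hi₀ j n (htrans _ _ _ hi₀i₁ hj) hn).le)
  calc min (netLimsup le fun j => l (x j)) (netLimsup le fun j => m (x j))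
      ≤ (⨆ j, ⨆ (_ : le i₁ j), l (x j)) ⊓ ⨆ k, ⨆ (_ : le i₁ k), m (x k) :=
        min_le_min (iInf_le _ i₁) (iInf_le _ i₁)
    _ = ⨆ j, ⨆ (_ : le i₁ j), ⨆ k, ⨆ (_ : le i₁ k), l (x j) ⊓ m (x k) := by
        rw [iSup₂_inf_eq]; simp only [inf_iSup₂_eq]
    _ ≤ _ := iSup₂_le fun j hj => iSup₂_le fun k hk => ?_
  obtain ⟨n, hjn, hkn⟩ := hdir j k
  calc l (x j) ⊓ m (x k) ≤ min (l (x n) + ε) (m (x n) + ε) :=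
        min_le_min (hmono l hl j n hj hjn) (hmono m hm k n hk hkn)
    _ = min (l (x n)) (m (x n)) + ε := min_add_add_right _ _ _
    _ ≤ _ := by gcongr; exact le_iSup₂_of_le n (htrans _ _ _ (htrans _ _ _ hii₁ hj) hjn) le_rfl

lemma ForwardCauchy.isIdeal_netLimsup_dist (hD : DirectedPre le) (hx : q.ForwardCauchy le x) :
    q.IsIdeal fun y => netLimsup le fun j => q.d y (x j) := by
  refine ⟨isWeight_netLimsup_dist, hx.iInf_netLimsup_dist hD, fun l m hl hm => ?_⟩
  rw [hx.rho_netLimsup_dist hD (isWeight_min hl hm), hx.rho_netLimsup_dist hD hl,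
    hx.rho_netLimsup_dist hD hm, hx.netLimsup_min hD hl hm]

end Net

end QuasiMetric

open QuasiMetric in
theorem stmt7_general {X : Type u} (q : QuasiMetric X) (φ : X → ℝ≥0∞) :
    q.IsIdeal φ ↔
      ∃ (D : Type u) (le : D → D → Prop), DirectedPre le ∧ Nonempty D ∧
        ∃ x : D → X, q.ForwardCauchy le x ∧
          ∀ y, φ y = ⨅ i, ⨆ j, ⨆ (_ : le i j), q.d y (x j) := by
  refine ⟨fun hI => ?_, ?_⟩
  · exact ⟨ballsAbove φ, fun p p' => q.ballLE p.1 p'.1, directedPre_ballLE hI.directedOn_ballsAbove,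
      hI.nonempty_ballsAbove, fun p => p.1.1, hI.forwardCauchy_ballsAbove,
      hI.eq_netLimsup_ballsAbove⟩
  · rintro ⟨D, le, hD, -, x, hx, hφ⟩
    rw [show φ = fun y => netLimsup le fun j => q.d y (x j) from funext hφ]
    exact hx.isIdeal_netLimsup_dist hD

open QuasiMetric in
/-- a weight `φ` is an ideal iff there is a forward Cauchy net `{x_i}` with
`φ = inf_i sup_{j ≥ i} d (−, x_j)` pointwise. -/
theorem stmt7 {X : Type u} (q : QuasiMetric X) (φ : X → ℝ≥0∞) (hφ : q.IsWeight φ) :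
    q.IsIdeal φ ↔
      ∃ (D : Type u) (le : D → D → Prop), DirectedPre le ∧ Nonempty D ∧
        ∃ x : D → X, q.ForwardCauchy le x ∧
          ∀ y, φ y = ⨅ i, ⨆ j, ⨆ (_ : le i j), q.d y (x j) :=
  stmt7_general q φ
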